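/- For every integer n ≥ 2 and every rational number d, the identity Σ_{k=0}^{n-1} (-1)^{n+k+1} · C(n-1,k) · binom(kd, n+1) = ((3n−2)d − (3n+2))/24 · d^{n-1}·(d−1)·(n−1) holds, i.e., the quantity A_1 from the Euler characteristic computation of a complete intersection surface has the stated closed form. -/

import Mathlib

/-!
The sum is the `(n-1)`-st forward difference at `0` of `x ↦ binom(xd, n+1)`, a polynomial in `x`
whose coefficient of `x^j` is `(-1)^(n+1+j) s(n+1, j) d^j / (n+1)!` with `s` the Stirling numbers
of the first kind. Since `Δ^m (x ↦ x^j)` at `0` is `m! S(j, m)`, with `S` the Stirling numbers of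
the second kind, which vanishes for `j < m`, only the three top coefficients contribute, and the
closed forms of `s(m+2, m)` and `S(m+2, m)` give the identity.
-/

open Finset Polynomial Nat fwdDiff

/-- The generalized binomial coefficient `binom(x, n) = x(x-1)⋯(x-n+1)/n!` for `x : ℚ`. -/
def gbinom (x : ℚ) (n : ℕ) : ℚ :=
  (∏ i ∈ Finset.range n, (x - i)) / (n.factorial : ℚ)

namespace Nat

theorem two_mul_succ_choose_two (n : ℕ) : 2 * (n + 1).choose 2 = n * (n + 1) := by
  rw [choose_two_right, add_tsub_cancel_right, mul_comm (n + 1)]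
  exact Nat.mul_div_cancel' (even_mul_succ_self n).two_dvd

theorem stirlingFirst_add_two_self_left (n : ℕ) :
    24 * stirlingFirst (n + 2) n = n * (n + 1) * (n + 2) * (3 * n + 5) := by
  induction n with
  | zero => rfl
  | succ n ih =>
    have := two_mul_succ_choose_two (n + 1)
    rw [stirlingFirst_succ_succ, stirlingFirst_succ_self_left]
    nlinarith

theorem stirlingSecond_add_two_self_left (n : ℕ) :
    24 * stirlingSecond (n + 2) n = n * (n + 1) * (n + 2) * (3 * n + 1) := by
  induction n with
  | zero => rfl
  | succ n ih =>
    have := two_mul_succ_choose_two (n + 1)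
    rw [stirlingSecond_succ_succ, stirlingSecond_succ_self_left]
    nlinarith

end Nat

theorem coeff_descPochhammer {R : Type*} [Ring R] (n k : ℕ) :
    (descPochhammer R n).coeff k = (-1) ^ (n + k) * stirlingFirst n k := by
  induction n generalizing k with
  | zero => cases k <;> simp [coeff_one]
  | succ n ih =>
    cases k with
    | zero => simp [coeff_zero_eq_eval_zero]
    | succ k =>
      rw [descPochhammer_succ_right, ← map_natCast C, coeff_mul_X_sub_C, ih, ih,
        stirlingFirst_succ_succ, show n + 1 + (k + 1) = n + k + 2 by ring, pow_add _ (n + k) 2,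
        neg_one_sq, mul_one, ← add_assoc, pow_succ, Nat.cast_add, Nat.cast_mul, Nat.cast_comm]
      noncomm_ring

theorem gbinom_mul_eq_sum_stirlingFirst (d : ℚ) (N : ℕ) :
    (fun x ↦ gbinom (x * d) N)
      = fun x ↦ ∑ j ∈ range (N + 1), (-1) ^ (N + j) * stirlingFirst N j * d ^ j / N ! * x ^ j := by
  ext x
  rw [gbinom, ← descPochhammer_eval_eq_prod_range, eval_eq_sum_range, descPochhammer_natDegree,
    sum_div]
  refine sum_congr rfl fun j _ ↦ ?_
  rw [coeff_descPochhammer]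
  ring

section ForwardDifference

-- The space in `Δ_[1] ^[m]` matters: Mathlib's exterior power notation makes `]^` a token.

variable {R : Type*} [CommRing R]

theorem fwdDiff_iter_apply_zero_eq_sum (f : R → R) (m : ℕ) :
    Δ_[1] ^[m] f 0 = ∑ k ∈ range (m + 1), (-1) ^ (m + k) * m.choose k * f k := by
  rw [fwdDiff_iter_eq_sum_shift]
  refine sum_congr rfl fun k hk ↦ ?_
  rw [show m + k = (m - k) + 2 * k by have := mem_range.mp hk; omega, pow_add, pow_mul,
    neg_one_sq, one_pow, mul_one, zsmul_eq_mul]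
  simp

theorem fwdDiff_iter_succ_id_mul (g : R → R) (m : ℕ) (y : R) :
    Δ_[1] ^[m + 1] (fun x ↦ x * g x) y
      = y * Δ_[1] ^[m + 1] g y + (m + 1) * Δ_[1] ^[m] g (y + 1) := by
  induction m generalizing y with
  | zero => simp [fwdDiff]; ring
  | succ m ih =>
    rw [Function.iterate_succ_apply', fwdDiff, ih, ih]
    simp only [Function.iterate_succ_apply' _ _ g, fwdDiff]
    push_cast
    ring

theorem fwdDiff_iter_pow_apply_zero (j m : ℕ) :
    Δ_[1] ^[m] (fun x : R ↦ x ^ j) 0 = m ! * stirlingSecond j m := by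
  induction j generalizing m with
  | zero =>
    cases m with
    | zero => simp
    | succ m => rw [fwdDiff_iter_pow_eq_zero_of_lt m.succ_pos]; simp
  | succ j ih =>
    cases m with
    | zero => simp
    | succ m =>
      have hshift : Δ_[1] ^[m] (fun x : R ↦ x ^ j) (0 + 1)
          = Δ_[1] ^[m] (fun x : R ↦ x ^ j) 0 + Δ_[1] ^[m + 1] (fun x : R ↦ x ^ j) 0 := by
        rw [Function.iterate_succ_apply', fwdDiff]; ring
      simp_rw [_root_.pow_succ']
      rw [fwdDiff_iter_succ_id_mul, zero_mul, zero_add, hshift, ih, ih, factorial_succ,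
        stirlingSecond_succ_succ]
      push_cast
      ring

theorem fwdDiff_iter_sum_mul_pow_apply_zero (a : ℕ → R) (N m : ℕ) :
    Δ_[1] ^[m] (fun x : R ↦ ∑ j ∈ range N, a j * x ^ j) 0
      = ∑ j ∈ range N, a j * (m ! * stirlingSecond j m) := by
  simp_rw [← sum_apply _ _ (fun j x ↦ a j * x ^ j), fwdDiff_iter_finsetSum, Finset.sum_apply]
  refine sum_congr rfl fun j _ ↦ ?_
  rw [← fwdDiff_iter_pow_apply_zero, ← smul_eq_mul, ← Pi.smul_apply, ← fwdDiff_iter_const_smul]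
  rfl

end ForwardDifference

theorem A1_closed_form (n : ℕ) (hn : 2 ≤ n) (d : ℚ) :
    ∑ k ∈ Finset.range n,
        (-1) ^ (n + k + 1) * ((n - 1).choose k : ℚ) * gbinom ((k : ℚ) * d) (n + 1)
      = ((3 * (n : ℚ) - 2) * d - (3 * (n : ℚ) + 2)) / 24
          * d ^ (n - 1) * (d - 1) * ((n : ℚ) - 1) := by
  obtain ⟨m, rfl⟩ : ∃ m, n = m + 1 := ⟨n - 1, by omega⟩
  have hS : (stirlingSecond (m + 2) m : ℚ) = m * (m + 1) * (m + 2) * (3 * m + 1) / 24 := by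
    rw [eq_div_iff (by norm_num), mul_comm]; exact_mod_cast stirlingSecond_add_two_self_left m
  have hs : (stirlingFirst (m + 2) m : ℚ) = m * (m + 1) * (m + 2) * (3 * m + 5) / 24 := by
    rw [eq_div_iff (by norm_num), mul_comm]; exact_mod_cast stirlingFirst_add_two_self_left m
  have hdiff : ∑ k ∈ range (m + 1),
        (-1) ^ (m + 1 + k + 1) * ((m + 1 - 1).choose k : ℚ) * gbinom ((k : ℚ) * d) (m + 1 + 1)
      = Δ_[1] ^[m] (fun x ↦ gbinom (x * d) (m + 2)) 0 := by
    rw [fwdDiff_iter_apply_zero_eq_sum]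
    refine sum_congr rfl fun k _ ↦ ?_
    rw [add_tsub_cancel_right, show m + 1 + k + 1 = m + k + 2 by omega, pow_add _ _ 2, neg_one_sq,
      mul_one]
  rw [hdiff, gbinom_mul_eq_sum_stirlingFirst, fwdDiff_iter_sum_mul_pow_apply_zero, sum_range_succ,
    sum_range_succ, sum_range_succ, sum_eq_zero fun j hj ↦ by
      rw [stirlingSecond_eq_zero_of_lt (mem_range.mp hj), cast_zero, mul_zero, mul_zero]]
  rw [stirlingSecond_self, stirlingSecond_succ_self_left, hS, stirlingFirst_self,
    stirlingFirst_succ_self_left, hs, factorial_succ, factorial_succ,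
    show m + 2 + m = 2 * (m + 1) by ring, show m + 2 + (m + 1) = 2 * (m + 1) + 1 by ring,
    show m + 2 + (m + 2) = 2 * (m + 1) + 2 by ring]
  simp only [pow_add, pow_mul, neg_one_sq, one_pow]
  push_cast [cast_choose_two]
  field_simp
  ring
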